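/- arXiv:2006.07449 — 5 statements merged into one kernel-verified Lean document; each statement's English description precedes it below -/
import Mathlib

section
/- Let G be a finite simple graph with vertex set V, let A ⊆ V, and let M_A be a maximal independent set of the induced subgraph G[A]. Let B be the set of all vertices of V that are not in A and have no neighbor in M_A, and let M_B be a maximal independent set of the induced subgraph G[B]. Then M_A ∪ M_B is a maximal independent set of G. -/
namespace SimpleGraph

variable {V : Type*} (G : SimpleGraph V) {A I J : Set V}

theorem not_adj_union (hI : ∀ u ∈ I, ∀ v ∈ I, ¬G.Adj u v) (hJ : ∀ u ∈ J, ∀ v ∈ J, ¬G.Adj u v)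
    (hJI : ∀ u ∈ J, ∀ w ∈ I, ¬G.Adj u w) :
    ∀ u ∈ I ∪ J, ∀ v ∈ I ∪ J, ¬G.Adj u v := by
  rintro u (hu | hu) v (hv | hv) huv
  · exact hI u hu v hv huv
  · exact hJI v hv u hu huv.symm
  · exact hJI u hu v hv huv
  · exact hJ u hu v hv huv

/-- A vertex outside `A` that is not dominated by `I` survives the elimination step, so it is
dominated by `J`. -/
theorem dominated_union_of_dominated_remainder
    (hI : ∀ v ∈ A, v ∈ I ∨ ∃ w ∈ I, G.Adj v w)
    (hJ : ∀ v ∈ {v | v ∉ A ∧ ∀ w ∈ I, ¬G.Adj v w}, v ∈ J ∨ ∃ w ∈ J, G.Adj v w) (v : V) :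
    v ∈ I ∪ J ∨ ∃ w ∈ I ∪ J, G.Adj v w := by
  by_cases hvA : v ∈ A
  · rcases hI v hvA with hv | ⟨w, hw, hvw⟩
    · exact .inl (.inl hv)
    · exact .inr ⟨w, .inl hw, hvw⟩
  by_cases hvI : ∃ w ∈ I, G.Adj v w
  · obtain ⟨w, hw, hvw⟩ := hvI
    exact .inr ⟨w, .inl hw, hvw⟩
  push Not at hvI
  rcases hJ v ⟨hvA, hvI⟩ with hv | ⟨w, hw, hvw⟩
  · exact .inl (.inr hv)
  · exact .inr ⟨w, .inr hw, hvw⟩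

end SimpleGraph

theorem sleepingMIS_union_is_MIS_general {V : Type*} (G : SimpleGraph V)
    (A MA B MB : Set V)
    (hMAind : ∀ u ∈ MA, ∀ v ∈ MA, ¬ G.Adj u v)
    (hMAmax : ∀ v ∈ A, v ∈ MA ∨ ∃ w ∈ MA, G.Adj v w)
    (hB : B = {v | v ∉ A ∧ ∀ w ∈ MA, ¬ G.Adj v w})
    (hMBsub : MB ⊆ B)
    (hMBind : ∀ u ∈ MB, ∀ v ∈ MB, ¬ G.Adj u v)
    (hMBmax : ∀ v ∈ B, v ∈ MB ∨ ∃ w ∈ MB, G.Adj v w) :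
    (∀ u ∈ MA ∪ MB, ∀ v ∈ MA ∪ MB, ¬ G.Adj u v) ∧
    (∀ v : V, v ∈ MA ∪ MB ∨ ∃ w ∈ MA ∪ MB, G.Adj v w) := by
  subst hB
  exact ⟨G.not_adj_union hMAind hMBind fun u hu => (hMBsub hu).2,
    G.dominated_union_of_dominated_remainder hMAmax hMBmax⟩

/-- Let `G` be a finite simple graph with vertex set `V`, `A ⊆ V`,
and `MA` a maximal independent set of the induced subgraph `G[A]`.  Let `B` be the set
of vertices not in `A` having no neighbor in `MA`, and `MB` a maximal independent set of
`G[B]`.  Then `MA ∪ MB` is a maximal independent set of `G`. -/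
theorem sleepingMIS_union_is_MIS {V : Type*} [Fintype V] (G : SimpleGraph V)
    (A MA B MB : Set V)
    (hMAsub : MA ⊆ A)
    (hMAind : ∀ u ∈ MA, ∀ v ∈ MA, ¬ G.Adj u v)
    (hMAmax : ∀ v ∈ A, v ∈ MA ∨ ∃ w ∈ MA, G.Adj v w)
    (hB : B = {v | v ∉ A ∧ ∀ w ∈ MA, ¬ G.Adj v w})
    (hMBsub : MB ⊆ B)
    (hMBind : ∀ u ∈ MB, ∀ v ∈ MB, ¬ G.Adj u v)
    (hMBmax : ∀ v ∈ B, v ∈ MB ∨ ∃ w ∈ MB, G.Adj v w) :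
    (∀ u ∈ MA ∪ MB, ∀ v ∈ MA ∪ MB, ¬ G.Adj u v) ∧
    (∀ v : V, v ∈ MA ∪ MB ∨ ∃ w ∈ MA ∪ MB, G.Adj v w) :=
  sleepingMIS_union_is_MIS_general G A MA B MB hMAind hMAmax hB hMBsub hMBind hMBmax
end

section
/- Let G be a finite simple graph with vertex set V, let A ⊆ V, and let M be a maximal independent set of the induced subgraph G[A]. Let I' be the set of vertices v ∈ V \ A such that v has no neighbor in M and every neighbor w of v satisfies: w ∉ M and w has a neighbor in M. Then M ∪ I' is an independent set of G. -/
theorem second_isolated_detection_independent_general {V : Type*} (G : SimpleGraph V)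
    (A M I' : Set V)
    (hMind : ∀ u ∈ M, ∀ v ∈ M, ¬ G.Adj u v)
    (hI' : I' = {v | v ∉ A ∧ (∀ w ∈ M, ¬ G.Adj v w) ∧
      ∀ w, G.Adj v w → w ∉ M ∧ ∃ u ∈ M, G.Adj w u}) :
    ∀ u ∈ M ∪ I', ∀ v ∈ M ∪ I', ¬ G.Adj u v := by
  subst hI'
  rintro u (hu | ⟨-, hu_free, hu_nbrs⟩) v (hv | ⟨-, hv_free, -⟩) huv
  · exact hMind u hu v hv huv
  · exact hv_free u hu huv.symm
  · exact hu_free v hv huv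
  · -- every neighbour of `u ∈ I'` has a neighbour in `M`, which `v ∈ I'` does not
    obtain ⟨w, hw, hvw⟩ := (hu_nbrs v huv).2
    exact hv_free w hw hvw

/-- Let `G` be a finite simple graph, `A ⊆ V`, and `M` a maximal
independent set of the induced subgraph `G[A]`.  Let `I'` be the set of vertices
`v ∈ V \ A` such that `v` has no neighbor in `M` and every neighbor `w` of `v`
satisfies `w ∉ M` and `w` has a neighbor in `M`.  Then `M ∪ I'` is an independent
set of `G`. -/
theorem second_isolated_detection_independent {V : Type*} [Fintype V] (G : SimpleGraph V)
    (A M I' : Set V)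
    (hMsub : M ⊆ A)
    (hMind : ∀ u ∈ M, ∀ v ∈ M, ¬ G.Adj u v)
    (hMmax : ∀ v ∈ A, v ∈ M ∨ ∃ w ∈ M, G.Adj v w)
    (hI' : I' = {v | v ∉ A ∧ (∀ w ∈ M, ¬ G.Adj v w) ∧
      ∀ w, G.Adj v w → w ∉ M ∧ ∃ u ∈ M, G.Adj w u}) :
    ∀ u ∈ M ∪ I', ∀ v ∈ M ∪ I', ¬ G.Adj u v :=
  second_isolated_detection_independent_general G A M I' hMind hI'
end

section
/- Let G be a finite simple graph with vertex set U. Let (X_v)_{v ∈ U} be independent random bits, each equal to 1 with probability 1/2, and independently let ≺ be a uniformly random linear order on U. Let A = { v ∈ U : X_v = 1 }, and let M be the lexicographically first maximal independent set of the induced subgraph G[A] with respect to ≺, i.e., the unique M ⊆ A such that for every v ∈ A: v ∈ M if and only if every neighbor w of v with w ∈ A and v ≺ w satisfies w ∉ M. Let R = { v ∈ U : X_v = 0, v has no neighbor in M, and v has some neighbor w with w ∉ M and w has no neighbor in M }. Then for every vertex v ∈ U, Pr[v ∈ R] ≤ 1/4. -/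
/-!
Fix the order. If `v ∈ R`, some neighbour `w` of `v` is outside `M` and has no neighbour in `M`, so
`w` is asleep. Waking `w` up leaves the greedy decisions above `w` unchanged, hence `w` joins `M`
and is then the highest neighbour of `v` in `M`. So waking the witness is injective on the outcomes
with `v ∈ R`, and it lands among the outcomes where `v` is asleep but has a neighbour in `M`: at
most half of the outcomes with `v` asleep, i.e. a quarter of all outcomes, put `v` in `R`.
-/

open Function Set

theorem Set.two_mul_ncard_le_of_injOn {Ω : Type*} [Finite Ω] {E S : Set Ω} {f : Ω → Ω}
    (hES : E ⊆ S) (hf : InjOn f E) (hmaps : MapsTo f E (S \ E)) : 2 * E.ncard ≤ S.ncard := by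
  have hle := ncard_le_ncard_of_injOn f hmaps hf
  rw [ncard_sdiff hES] at hle
  have := ncard_le_ncard hES
  omega

theorem Function.setOf_update_true {V : Type*} [DecidableEq V] (b : V → Bool) (w : V) :
    {x | update b w true x = true} = insert w {x | b x = true} := by
  ext x
  by_cases h : x = w <;> simp [h]

theorem Function.injOn_update_true {V β : Type*} [DecidableEq V] (w : V) :
    InjOn (fun p : (V → Bool) × β => (update p.1 w true, p.2)) {p | p.1 w = false} := by
  have hret : ∀ b : V → Bool, b w = false → update (update b w true) w false = b := fun b hb => by
    rw [update_idem, ← hb, update_eq_self]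
  rintro ⟨b, π⟩ hb ⟨c, σ⟩ hc h
  obtain ⟨hbc, rfl⟩ := Prod.mk.inj h
  rw [← hret b hb, ← hret c hc, hbc]

theorem two_mul_ncard_setOf_eq_false_le {V β : Type*} [Finite V] [DecidableEq V] [Finite β]
    (v : V) : 2 * {p : (V → Bool) × β | p.1 v = false}.ncard ≤ Nat.card ((V → Bool) × β) := by
  rw [← ncard_univ]
  exact two_mul_ncard_le_of_injOn (subset_univ _) (injOn_update_true v)
    fun p _ => ⟨trivial, by simp⟩

namespace SimpleGraph

variable {V α : Type*} (G : SimpleGraph V)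

/-- `S` is the lexicographically first maximal independent set of `G[A]`, vertices of higher rank
`r` being decided first. -/
def IsLexFirstMIS [LT α] (r : V → α) (A S : Set V) : Prop :=
  S ⊆ A ∧ ∀ v ∈ A, (v ∈ S ↔ ∀ w, G.Adj v w → w ∈ A → r v < r w → w ∉ S)

/-- `v` takes part in the right recursive call of the Sleeping MIS algorithm when the vertices of
`A` are awake and `S` is the independent set they computed. -/
def IsResidual (A S : Set V) (v : V) : Prop :=
  v ∉ A ∧ Disjoint (G.neighborSet v) S ∧
    ∃ w ∈ G.neighborSet v, w ∉ S ∧ Disjoint (G.neighborSet w) S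

variable {G}

namespace IsLexFirstMIS

section Preorder

variable [Preorder α] {r : V → α} {A A' S S' : Set V}

theorem mem_iff_of_lt [WellFoundedGT α] (hS : G.IsLexFirstMIS r A S)
    (hS' : G.IsLexFirstMIS r A' S') {t : α} (hA : ∀ x, t < r x → (x ∈ A ↔ x ∈ A')) :
    ∀ u, t < r u → (u ∈ S ↔ u ∈ S') := by
  intro u
  induction u using (InvImage.wf r wellFounded_gt).induction with
  | _ u ih =>
  intro htu
  by_cases hu : u ∈ A
  · rw [hS.2 u hu, hS'.2 u ((hA u htu).1 hu)]
    refine forall_congr' fun w => imp_congr_right fun _ => ?_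
    by_cases huw : r u < r w
    · rw [hA w (htu.trans huw), ih w huw (htu.trans huw)]
    · simp only [huw, false_imp_iff, imp_true_iff]
  · have hu' : u ∉ A' := fun h => hu ((hA u htu).2 h)
    exact iff_of_false (fun h => hu (hS.1 h)) (fun h => hu' (hS'.1 h))

theorem mem_of_disjoint (hS : G.IsLexFirstMIS r A S) {w : V} (hw : w ∈ A)
    (hwS : Disjoint (G.neighborSet w) S) : w ∈ S :=
  (hS.2 w hw).2 fun _ hx _ _ => Set.disjoint_left.1 hwS hx

end Preorder

variable [LinearOrder α] [WellFoundedGT α] {r : V → α} {A S S' : Set V} {w : V}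

theorem mem_iff_of_insert_of_lt (hS : G.IsLexFirstMIS r A S)
    (hS' : G.IsLexFirstMIS r (insert w A) S') {u : V} (hwu : r w < r u) : u ∈ S ↔ u ∈ S' :=
  hS.mem_iff_of_lt hS' (fun x hx => by
    rw [mem_insert_iff, or_iff_right (by rintro rfl; exact hx.false)]) u hwu

theorem mem_of_insert (hS : G.IsLexFirstMIS r A S) (hS' : G.IsLexFirstMIS r (insert w A) S')
    (hwS : Disjoint (G.neighborSet w) S) : w ∈ S' :=
  (hS'.2 w (mem_insert w A)).2 fun _ hx _ hwx hxS' =>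
    Set.disjoint_left.1 hwS hx ((mem_iff_of_insert_of_lt hS hS' hwx).2 hxS')

theorem le_of_insert (hS : G.IsLexFirstMIS r A S) (hS' : G.IsLexFirstMIS r (insert w A) S')
    {v : V} (hvS : Disjoint (G.neighborSet v) S) {x : V} (hx : G.Adj v x) (hxS' : x ∈ S') :
    r x ≤ r w :=
  le_of_not_gt fun hwx => Set.disjoint_left.1 hvS hx ((mem_iff_of_insert_of_lt hS hS' hwx).2 hxS')

end IsLexFirstMIS

theorem two_mul_ncard_isResidual_le [Finite V] [LinearOrder V]
    {M : (V → Bool) → Equiv.Perm V → Set V}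
    (hM : ∀ b (π : Equiv.Perm V), G.IsLexFirstMIS π {x | b x = true} (M b π)) (v : V) :
    2 * {p : (V → Bool) × Equiv.Perm V | G.IsResidual {x | p.1 x = true} (M p.1 p.2) v}.ncard ≤
      {p : (V → Bool) × Equiv.Perm V | p.1 v = false}.ncard := by
  set E := {p : (V → Bool) × Equiv.Perm V | G.IsResidual {x | p.1 x = true} (M p.1 p.2) v}
  have : Nonempty V := ⟨v⟩
  choose! w hwv hwM hwS using fun p (hp : p ∈ E) => hp.2.2
  set wake := fun p : (V → Bool) × Equiv.Perm V => (update p.1 (w p) true, p.2)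
  have hM' : ∀ p, G.IsLexFirstMIS p.2 (insert (w p) {x | p.1 x = true}) (M (wake p).1 p.2) :=
    fun p => setOf_update_true p.1 (w p) ▸ hM _ _
  have hw_asleep : ∀ p ∈ E, p.1 (w p) = false := fun p hp => by
    by_contra h
    exact hwM p hp ((hM _ _).mem_of_disjoint (by simpa using h) (hwS p hp))
  have hw_mem : ∀ p ∈ E, w p ∈ M (wake p).1 p.2 := fun p hp =>
    (hM _ _).mem_of_insert (hM' p) (hwS p hp)
  have hmaps : MapsTo wake E ({p | p.1 v = false} \ E) := fun p hp => by
    refine ⟨?_, fun hwake => Set.disjoint_left.1 hwake.2.1 (hwv p hp) (hw_mem p hp)⟩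
    simpa [wake, update_of_ne (hwv p hp).ne] using hp.1
  have hinj : InjOn wake E := fun p hp q hq hpq => by
    obtain ⟨hb, hπ⟩ := Prod.ext_iff.1 hpq
    have hwq : w q ∈ M (wake p).1 p.2 := by rw [hb, hπ]; exact hw_mem q hq
    have hwp : w p ∈ M (wake q).1 q.2 := by rw [← hb, ← hπ]; exact hw_mem p hp
    have hwq_le : p.2 (w q) ≤ p.2 (w p) := (hM _ _).le_of_insert (hM' p) hp.2.1 (hwv q hq) hwq
    have hwp_le : q.2 (w p) ≤ q.2 (w q) := (hM _ _).le_of_insert (hM' q) hq.2.1 (hwv p hp) hwp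
    rw [← hπ] at hwp_le
    have hww : w p = w q := p.2.injective (le_antisymm hwp_le hwq_le)
    refine injOn_update_true (w q) (hww ▸ hw_asleep p hp) (hw_asleep q hq) ?_
    simpa only [wake, hww] using hpq
  exact Set.two_mul_ncard_le_of_injOn (fun p hp => by simpa using hp.1) hinj hmaps
end SimpleGraph

/-- **per-vertex Pruning Lemma, Lemma 4.3.**
Randomness is modeled by the uniform distribution on pairs `(b, π)` where
`b : V → Bool` is the vector of independent uniform bits and `π` is a uniformly random
permutation of `V` (the random linear order `≺` is `v ≺ w ↔ π v < π w`, which is a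
uniformly random linear order, independent of the bits).
`A = {v | b v = 1}`; `M b π` is the lexicographically first maximal independent set of
the induced subgraph `G[A]` w.r.t. `≺`; and `R b π` is the set of vertices `v` with
`b v = 0`, no neighbor in `M`, and some neighbor `w` with `w ∉ M` having no neighbor
in `M`.  Then each vertex `v` satisfies `Pr[v ∈ R] ≤ 1/4`. -/
theorem pruning_lemma_pointwise {V : Type*} [Fintype V] [LinearOrder V]
    (G : SimpleGraph V)
    (M : (V → Bool) → Equiv.Perm V → Set V)
    (hMsub : ∀ b π, ∀ v ∈ M b π, b v = true)
    (hMfix : ∀ b π, ∀ v : V, b v = true →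
      (v ∈ M b π ↔ ∀ w : V, G.Adj v w → b w = true → π v < π w → w ∉ M b π))
    (R : (V → Bool) → Equiv.Perm V → Set V)
    (hR : ∀ b π, ∀ v : V, v ∈ R b π ↔
      (b v = false ∧ (∀ w, G.Adj v w → w ∉ M b π) ∧
        ∃ w, G.Adj v w ∧ w ∉ M b π ∧ ∀ u, G.Adj w u → u ∉ M b π))
    (v : V) :
    (({p : (V → Bool) × Equiv.Perm V | v ∈ R p.1 p.2}).ncard : ℝ)
      / (Fintype.card ((V → Bool) × Equiv.Perm V) : ℝ) ≤ 1 / 4 := by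
  have hM : ∀ b (π : Equiv.Perm V), G.IsLexFirstMIS π {x | b x = true} (M b π) :=
    fun b π => ⟨hMsub b π, hMfix b π⟩
  have hE : {p : (V → Bool) × Equiv.Perm V | v ∈ R p.1 p.2} =
      {p | G.IsResidual {x | p.1 x = true} (M p.1 p.2) v} := by
    ext p
    simp [hR, SimpleGraph.IsResidual, Set.disjoint_left]
  have hhalf := G.two_mul_ncard_isResidual_le hM v
  have hhalf' := two_mul_ncard_setOf_eq_false_le (β := Equiv.Perm V) v
  rw [Nat.card_eq_fintype_card] at hhalf'
  rw [hE, div_le_div_iff₀ (by exact_mod_cast Fintype.card_pos) four_pos]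
  exact_mod_cast (by omega : _ * 4 ≤ 1 * _)
end

section
/- Let G be a finite simple graph with vertex set U. Let (X_v)_{v ∈ U} be independent random bits, each equal to 1 with probability 1/2, and independently let ≺ be a uniformly random linear order on U. Let A = { v ∈ U : X_v = 1 }, and let M be the lexicographically first maximal independent set of the induced subgraph G[A] with respect to ≺. Let L = { v ∈ U : v is not isolated in G and X_v = 1 } and let R = { v ∈ U : X_v = 0, v has no neighbor in M, and v has some neighbor w with w ∉ M and w has no neighbor in M }. Then E[|L| + |R|] ≤ (3/4)·|U|. -/
/-!
Fix a vertex `v`. It lies in `L` only if its bit is `1`, which happens for exactly half of the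
configurations `(b, π)`. If `v ∈ R`, then `b v = 0` and `v` has a neighbour `w` with no neighbour
in `M`; such a `w` is outside `M` only because `b w = 0`. Switching `b w` to `1` puts `w` into `M`
and leaves `M` unchanged above `w`, so in the new configuration `v` still has bit `0` but now has
a neighbour in `M`, and `w` is recovered as the `π`-largest such neighbour. This injects the
configurations with `v ∈ R` into a disjoint set of configurations with `b v = 0`, so `v ∈ R` for
at most a quarter of all configurations. Summing over `v` gives `E[|L| + |R|] ≤ (1/2 + 1/4)|U|`.
-/

open Function

section Counting

variable {ι α β : Type*}

theorem sum_ncard_eq_sum_ncard_setOf_mem [Fintype ι] [Fintype α] (s : ι → Set α) :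
    ∑ i, (s i).ncard = ∑ a, {i | a ∈ s i}.ncard := by
  classical
  simp only [Set.ncard_eq_toFinset_card']
  simpa [Finset.bipartiteAbove, Finset.bipartiteBelow] using
    Finset.sum_card_bipartiteAbove_eq_sum_card_bipartiteBelow (s := Finset.univ)
      (t := Finset.univ) (fun i a => a ∈ s i)

theorem mul_sum_ncard_le [Fintype ι] [Fintype α] (s : ι → Set α) {k m : ℕ}
    (h : ∀ a, k * {i | a ∈ s i}.ncard ≤ m) : k * ∑ i, (s i).ncard ≤ Fintype.card α * m := by
  calc k * ∑ i, (s i).ncard = ∑ a, k * {i | a ∈ s i}.ncard := by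
        rw [sum_ncard_eq_sum_ncard_setOf_mem, Finset.mul_sum]
    _ ≤ ∑ _a : α, m := Finset.sum_le_sum fun a _ => h a
    _ = Fintype.card α * m := by simp

theorem two_mul_ncard_setOf_fst_apply_eq [DecidableEq α] [Finite α] [Finite β] (a : α)
    (c : Bool) : 2 * {p : (α → Bool) × β | p.1 a = c}.ncard = Nat.card ((α → Bool) × β) := by
  set T := {p : (α → Bool) × β | p.1 a = c}
  let flip : (α → Bool) × β → (α → Bool) × β := fun p => (update p.1 a (!p.1 a), p.2)
  have hflip : Involutive flip := fun p => by simp [flip]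
  have himage : flip '' T = Tᶜ := by
    ext p
    simp [hflip.image_eq_preimage_symm, flip, T, Bool.eq_not_iff]
  rw [← Set.ncard_add_ncard_compl T, ← himage, Set.ncard_image_of_injective _ hflip.injective,
    two_mul]

end Counting

namespace SimpleGraph

variable {V : Type*} [LinearOrder V]

structure IsLexFirstMIS_s8 (G : SimpleGraph V) (b : V → Bool) (π : Equiv.Perm V) (S : Set V) :
    Prop where
  apply_eq_true : ∀ v ∈ S, b v = true
  mem_iff : ∀ v, b v = true → (v ∈ S ↔ ∀ w, G.Adj v w → b w = true → π v < π w → w ∉ S)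

namespace IsLexFirstMIS_s8

variable {G : SimpleGraph V} {b b' : V → Bool} {π : Equiv.Perm V} {S S' : Set V} {u v w : V}

theorem mem_iff_mem_of_agree_above [Finite V] (hS : G.IsLexFirstMIS_s8 b π S)
    (hS' : G.IsLexFirstMIS_s8 b' π S') (hagree : ∀ x, π u ≤ π x → b x = b' x) :
    u ∈ S ↔ u ∈ S' := by
  induction u using (InvImage.wf π wellFounded_gt).induction with
  | _ u ih =>
  have hbu := hagree u le_rfl
  cases hu : b u
  · exact iff_of_false (fun h => by simpa [hu] using hS.apply_eq_true u h)
      (fun h => by simpa [← hbu, hu] using hS'.apply_eq_true u h)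
  rw [hS.mem_iff u hu, hS'.mem_iff u (hbu ▸ hu)]
  refine forall_congr' fun w => imp_congr_right fun _ => ?_
  by_cases hw : π u < π w
  · rw [hagree w hw.le, ih w hw fun x hx => hagree x (hw.le.trans hx)]
  · simp [hw]

theorem mem_iff_mem_update_of_lt [Finite V] {c : Bool} (hS : G.IsLexFirstMIS_s8 b π S)
    (hS' : G.IsLexFirstMIS_s8 (update b w c) π S') (hwu : π w < π u) : u ∈ S ↔ u ∈ S' :=
  hS.mem_iff_mem_of_agree_above hS' fun x hx =>
    (update_of_ne (by rintro rfl; exact hwu.not_ge hx) _ _).symm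

theorem mem_update_true [Finite V] (hS : G.IsLexFirstMIS_s8 b π S)
    (hS' : G.IsLexFirstMIS_s8 (update b w true) π S') (hw : ∀ u, G.Adj w u → u ∉ S) : w ∈ S' :=
  (hS'.mem_iff w (by simp)).2 fun u hwu _ hlt =>
    (hS.mem_iff_mem_update_of_lt hS' hlt).not.1 (hw u hwu)

theorem le_of_adj_of_mem_update [Finite V] {c : Bool} (hS : G.IsLexFirstMIS_s8 b π S)
    (hS' : G.IsLexFirstMIS_s8 (update b w c) π S') (hv : ∀ u, G.Adj v u → u ∉ S)
    (hvu : G.Adj v u) (hu : u ∈ S') : π u ≤ π w :=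
  le_of_not_gt fun hwu => hv u hvu ((hS.mem_iff_mem_update_of_lt hS' hwu).2 hu)

theorem apply_eq_false (hS : G.IsLexFirstMIS_s8 b π S) (hw : w ∉ S)
    (hnb : ∀ u, G.Adj w u → u ∉ S) : b w = false := by
  by_contra h
  exact hw ((hS.mem_iff w (by simpa using h)).2 fun u hu _ _ => hnb u hu)

end IsLexFirstMIS_s8

def rightParticipants (G : SimpleGraph V) (b : V → Bool) (S : Set V) : Set V :=
  {v | b v = false ∧ (∀ w, G.Adj v w → w ∉ S) ∧
    ∃ w, G.Adj v w ∧ w ∉ S ∧ ∀ u, G.Adj w u → u ∉ S}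

variable [Finite V] {G : SimpleGraph V} {M : (V → Bool) → Equiv.Perm V → Set V}

theorem ncard_rightParticipants_le (hM : ∀ b π, G.IsLexFirstMIS_s8 b π (M b π)) (v : V) :
    {p : (V → Bool) × Equiv.Perm V | v ∈ G.rightParticipants p.1 (M p.1 p.2)}.ncard ≤
      {p : (V → Bool) × Equiv.Perm V | p.1 v = false ∧ ∃ w, G.Adj v w ∧ w ∈ M p.1 p.2}.ncard := by
  have hwit : ∀ p ∈ {p : (V → Bool) × Equiv.Perm V | v ∈ G.rightParticipants p.1 (M p.1 p.2)},
      ∃ w, G.Adj v w ∧ p.1 w = false ∧ ∀ u, G.Adj w u → u ∉ M p.1 p.2 := by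
    rintro p ⟨-, -, w, hvw, hwM, hw⟩
    exact ⟨w, hvw, (hM p.1 p.2).apply_eq_false hwM hw, hw⟩
  have : Nonempty V := ⟨v⟩
  choose! wit hvwit hwit_false hwit_free using hwit
  refine Set.ncard_le_ncard_of_injOn (fun p => (update p.1 (wit p) true, p.2)) ?_ ?_
  · intro p hp
    refine ⟨?_, wit p, hvwit p hp, (hM _ _).mem_update_true (hM _ _) (hwit_free p hp)⟩
    change update p.1 (wit p) true v = false
    rw [update_of_ne (G.ne_of_adj (hvwit p hp))]
    exact hp.1
  · rintro ⟨b, π⟩ hp ⟨b', π'⟩ hp' h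
    obtain ⟨hb, rfl⟩ := Prod.mk.inj h
    dsimp only at hb
    -- each witness is the `π`-largest neighbour of `v` in the common flipped MIS
    have hwS := (hM b π).mem_update_true (hM _ π) (hwit_free _ hp)
    have hw'S := (hM b' π).mem_update_true (hM _ π) (hwit_free _ hp')
    have hle : π (wit (b', π)) ≤ π (wit (b, π)) :=
      (hM b π).le_of_adj_of_mem_update (hM _ π) hp.2.1 (hvwit _ hp') (hb ▸ hw'S)
    have hge : π (wit (b, π)) ≤ π (wit (b', π)) :=
      (hM b' π).le_of_adj_of_mem_update (hM _ π) hp'.2.1 (hvwit _ hp) (hb ▸ hwS)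
    have hw : wit (b', π) = wit (b, π) := π.injective (le_antisymm hle hge)
    rw [hw] at hb
    refine Prod.ext (funext fun x => ?_) rfl
    rcases eq_or_ne x (wit (b, π)) with rfl | hx
    · exact (hwit_false _ hp).trans (hw ▸ hwit_false _ hp').symm
    · simpa [update_of_ne hx] using congrFun hb x

theorem four_mul_ncard_rightParticipants_le (hM : ∀ b π, G.IsLexFirstMIS_s8 b π (M b π)) (v : V) :
    4 * {p : (V → Bool) × Equiv.Perm V | v ∈ G.rightParticipants p.1 (M p.1 p.2)}.ncard ≤
      Nat.card ((V → Bool) × Equiv.Perm V) := by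
  set S := {p : (V → Bool) × Equiv.Perm V | v ∈ G.rightParticipants p.1 (M p.1 p.2)}
  set B := {p : (V → Bool) × Equiv.Perm V | p.1 v = false ∧ ∃ w, G.Adj v w ∧ w ∈ M p.1 p.2}
  have hdisj : Disjoint S B :=
    Set.disjoint_left.2 fun p hpS ⟨_, w, hvw, hw⟩ => hpS.2.1 w hvw hw
  have hsub : S ∪ B ⊆ {p | p.1 v = false} := Set.union_subset (fun p hp => hp.1) fun p hp => hp.1
  have hSB : S.ncard ≤ B.ncard := ncard_rightParticipants_le hM v
  have hhalf : 2 * {p : (V → Bool) × Equiv.Perm V | p.1 v = false}.ncard = _ :=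
    two_mul_ncard_setOf_fst_apply_eq v false
  have hunion := Set.ncard_union_eq hdisj
  have hle := Set.ncard_le_ncard hsub
  omega

end SimpleGraph

/-- **Lemma 4.2 + Pruning Lemma 4.3 combined.**
Randomness is modeled by the uniform distribution on pairs `(b, π)` where
`b : V → Bool` is the vector of independent uniform bits and `π` is a uniformly random
permutation of `V` (the random linear order `≺` is `v ≺ w ↔ π v < π w`, which is a
uniformly random linear order, independent of the bits).
`A = {v | b v = 1}`; `M b π` is the lexicographically first maximal independent set of
`G[A]` w.r.t. `≺`; `L b` is the set of non-isolated vertices with bit `1`; and `R b π`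
is the set of vertices `v` with `b v = 0`, no neighbor in `M`, and some neighbor `w`
with `w ∉ M` having no neighbor in `M`.  Then `E[|L| + |R|] ≤ (3/4)·|U|`. -/
theorem left_plus_right_participants {V : Type*} [Fintype V] [LinearOrder V]
    (G : SimpleGraph V)
    (M : (V → Bool) → Equiv.Perm V → Set V)
    (hMsub : ∀ b π, ∀ v ∈ M b π, b v = true)
    (hMfix : ∀ b π, ∀ v : V, b v = true →
      (v ∈ M b π ↔ ∀ w : V, G.Adj v w → b w = true → π v < π w → w ∉ M b π))
    (L : (V → Bool) → Set V)
    (hL : ∀ b, ∀ v : V, v ∈ L b ↔ ((∃ w, G.Adj v w) ∧ b v = true))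
    (R : (V → Bool) → Equiv.Perm V → Set V)
    (hR : ∀ b π, ∀ v : V, v ∈ R b π ↔
      (b v = false ∧ (∀ w, G.Adj v w → w ∉ M b π) ∧
        ∃ w, G.Adj v w ∧ w ∉ M b π ∧ ∀ u, G.Adj w u → u ∉ M b π)) :
    (∑ p : (V → Bool) × Equiv.Perm V, (((L p.1).ncard : ℝ) + ((R p.1 p.2).ncard : ℝ)))
      / (Fintype.card ((V → Bool) × Equiv.Perm V) : ℝ)
      ≤ (3 / 4 : ℝ) * (Fintype.card V : ℝ) := by
  have hM : ∀ b π, G.IsLexFirstMIS_s8 b π (M b π) := fun b π => ⟨hMsub b π, hMfix b π⟩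
  have hRdef : ∀ b π, R b π = G.rightParticipants b (M b π) := fun b π => Set.ext (hR b π)
  have hLv : ∀ v, 2 * {p : (V → Bool) × Equiv.Perm V | v ∈ L p.1}.ncard ≤
      Fintype.card ((V → Bool) × Equiv.Perm V) := fun v => calc
    _ ≤ 2 * {p : (V → Bool) × Equiv.Perm V | p.1 v = true}.ncard :=
      Nat.mul_le_mul_left _
        (Set.ncard_le_ncard fun (p : (V → Bool) × Equiv.Perm V) hp => ((hL p.1 v).1 hp).2)
    _ = _ := by rw [two_mul_ncard_setOf_fst_apply_eq, Nat.card_eq_fintype_card]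
  have hRv : ∀ v, 4 * {p : (V → Bool) × Equiv.Perm V | v ∈ R p.1 p.2}.ncard ≤
      Fintype.card ((V → Bool) × Equiv.Perm V) := fun v => by
    simpa only [hRdef, Nat.card_eq_fintype_card] using G.four_mul_ncard_rightParticipants_le hM v
  have hLsum : (2 * ∑ p : (V → Bool) × Equiv.Perm V, (L p.1).ncard : ℝ) ≤
      Fintype.card V * Fintype.card ((V → Bool) × Equiv.Perm V) := by
    exact_mod_cast mul_sum_ncard_le (fun p : (V → Bool) × Equiv.Perm V => L p.1) hLv
  have hRsum : (4 * ∑ p : (V → Bool) × Equiv.Perm V, (R p.1 p.2).ncard : ℝ) ≤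
      Fintype.card V * Fintype.card ((V → Bool) × Equiv.Perm V) := by
    exact_mod_cast mul_sum_ncard_le (fun p : (V → Bool) × Equiv.Perm V => R p.1 p.2) hRv
  push_cast at hLsum hRsum
  rw [div_le_iff₀ (Nat.cast_pos.2 Fintype.card_pos), Finset.sum_add_distrib]
  linarith
end

section
/- Let G be a finite simple graph with vertex set U, let ≺ be a linear order on U, and let X : U → {0,1} be an assignment of bits. Let A = { v : X_v = 1 } and let M be the lexicographically first maximal independent set of the induced subgraph G[A] with respect to ≺. Process the vertices of U one at a time in decreasing ≺-order, maintaining labels as follows: when a vertex v is processed, if v is currently unlabeled then v is labeled 'sequence-fixed', and moreover if X_v = 1 then every currently unlabeled neighbor of v is labeled 'neighbor-fixed'. Then: (1) every sequence-fixed vertex v with X_v = 1 belongs to M; and (2) every neighbor-fixed vertex w satisfies w ∉ M and w has a neighbor in M. -/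
/-!
Both the set `SF` of sequence-fixed vertices and the lexicographically first maximal
independent set `M` satisfy, on the active vertices `A = {v | X v = true}`, the same greedy
recursion: a vertex is in the set iff no higher active neighbour is. Descending induction on
the order shows that this recursion determines a set on `A`, so `SF ∩ A = M`. A neighbour-fixed
vertex `w` has a higher active neighbour `u ∈ SF`, hence `u ∈ M`, and `u` blocks `w` from `M`.
-/

namespace SimpleGraph

variable {V : Type*} [LinearOrder V] (G : SimpleGraph V)

/-- The recursion defining the lexicographically first maximal independent set of `G[A]`,
processing vertices in decreasing order. Only the part of `S` inside `A` is constrained. -/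
def IsGreedyFixedPoint (A S : Set V) : Prop :=
  ∀ v ∈ A, v ∈ S ↔ ∀ w ∈ A, G.Adj v w → v < w → w ∉ S

variable {G}

theorem IsGreedyFixedPoint.mem_iff_mem [WellFoundedGT V] {A S T : Set V}
    (hS : G.IsGreedyFixedPoint A S) (hT : G.IsGreedyFixedPoint A T) {v : V} (hv : v ∈ A) :
    v ∈ S ↔ v ∈ T := by
  induction v using WellFoundedGT.induction with
  | _ v ih =>
    rw [hS v hv, hT v hv]
    refine forall₂_congr fun w hw => forall₂_congr fun _ hlt => ?_
    rw [ih w hlt hw]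

end SimpleGraph

/-- **Lemma 4.7, deferred-decision labeling.**
`G` is a finite simple graph whose vertex set carries the linear order `<` (the order
`≺`), `X : V → Bool` is an assignment of bits, `A = {v | X v = true}`, and `M` is the
lexicographically first maximal independent set of `G[A]` w.r.t. `<`.
The vertices are processed one at a time in decreasing order; a vertex is labeled
*sequence-fixed* if it is unlabeled when processed, and whenever a vertex `v` is
sequence-fixed with `X v = 1`, all its currently unlabeled neighbors are labeled
*neighbor-fixed*.  Unwinding this process along the decreasing order, the set `SF` of
sequence-fixed vertices is characterized by the fixed point:
`v ∈ SF ↔ every neighbor w of v with v < w and X w = 1 satisfies w ∉ SF`,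
and the neighbor-fixed vertices are exactly those not in `SF`.
Then (1) every sequence-fixed vertex `v` with `X v = 1` belongs to `M`, and
(2) every neighbor-fixed vertex `w` satisfies `w ∉ M` and has a neighbor in `M`. -/
theorem deferred_decision_labels {V : Type*} [Fintype V] [LinearOrder V]
    (G : SimpleGraph V) (X : V → Bool) (M : Set V)
    (hMsub : ∀ v ∈ M, X v = true)
    (hMfix : ∀ v : V, X v = true →
      (v ∈ M ↔ ∀ w : V, G.Adj v w → X w = true → v < w → w ∉ M))
    (SF : Set V)
    (hSF : ∀ v : V, v ∈ SF ↔ ∀ w : V, G.Adj v w → v < w → X w = true → w ∉ SF) :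
    (∀ v ∈ SF, X v = true → v ∈ M) ∧
    (∀ w : V, w ∉ SF → w ∉ M ∧ ∃ u, G.Adj w u ∧ u ∈ M) := by
  have hM : G.IsGreedyFixedPoint {v | X v = true} M := fun v hv => by
    rw [hMfix v hv]
    exact forall_congr' fun w => by tauto
  have hSF' : G.IsGreedyFixedPoint {v | X v = true} SF := fun v _ => by
    rw [hSF v]
    exact forall_congr' fun w => by tauto
  have hSF_iff_M {v : V} (hv : X v = true) : v ∈ SF ↔ v ∈ M := hSF'.mem_iff_mem hM hv
  refine ⟨fun v hv hX => (hSF_iff_M hX).mp hv, fun w hw => ?_⟩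
  obtain ⟨u, hwu, hlt, hXu, huSF⟩ : ∃ u, G.Adj w u ∧ w < u ∧ X u = true ∧ u ∈ SF := by
    simpa [hSF w] using hw
  have huM : u ∈ M := (hSF_iff_M hXu).mp huSF
  exact ⟨fun hwM => (hMfix w (hMsub w hwM)).mp hwM u hwu hXu hlt huM, u, hwu, huM⟩
end
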